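/- Let h : ℝ → ℝ be smooth and consider ℝ³ with coordinates (t,x,y) and the Lorentzian metric g_h whose only nonzero components on coordinate frames are g(∂t,∂t) = g(∂x,∂y) = 1 and g(∂x,∂x) = -2h(t). Then the only nonzero covariant derivatives of coordinate frames under the Levi-Civita connection are ∇_{∂x}∂x = h'(t)∂t and ∇_{∂x}∂t = ∇_{∂t}∂x = -h'(t)∂y. -/

import Mathlib

/-- The metric g_h on ℝ³ with coordinates (t,x,y) = (p 0, p 1, p 2):
g(∂t,∂t) = g(∂x,∂y) = g(∂y,∂x) = 1, g(∂x,∂x) = -2h(t), all other components zero. -/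
noncomputable def gh (h : ℝ → ℝ) (p : Fin 3 → ℝ) (i j : Fin 3) : ℝ :=
  if i = 0 ∧ j = 0 then 1
  else if (i = 1 ∧ j = 2) ∨ (i = 2 ∧ j = 1) then 1
  else if i = 1 ∧ j = 1 then -2 * h (p 0) else 0

/-- Christoffel symbols of the Levi-Civita connection of `g`: torsion-free and
metric-compatible. -/
def IsLeviCivita (g : (Fin 3 → ℝ) → Fin 3 → Fin 3 → ℝ)
    (Γ : (Fin 3 → ℝ) → Fin 3 → Fin 3 → Fin 3 → ℝ) : Prop :=
  (∀ p i j k, Γ p i j k = Γ p j i k) ∧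
  (∀ (p : Fin 3 → ℝ) (i j k : Fin 3),
    fderiv ℝ (fun q => g q j k) p (Pi.single i 1) =
      (∑ l, Γ p i j l * g p l k) + (∑ l, Γ p i k l * g p j l))

lemma fd11 (h : ℝ → ℝ) (hh : ContDiff ℝ (⊤ : ℕ∞) h) (p : Fin 3 → ℝ) :
    HasFDerivAt (fun q : Fin 3 → ℝ => 2 * h (q 0))
      ((2 : ℝ) • ((fderiv ℝ h (p 0)).comp (ContinuousLinearMap.proj 0))) p := by
  have h1 := hasFDerivAt_apply (𝕜 := ℝ) (0 : Fin 3) p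
  have h2 := (hh.differentiable (by simp) (p 0)).hasFDerivAt
  exact (h2.comp p h1).const_mul 2

lemma fd (h : ℝ → ℝ) (hh : ContDiff ℝ (⊤ : ℕ∞) h) (p : Fin 3 → ℝ) (i j k : Fin 3) :
    fderiv ℝ (fun q => gh h q j k) p (Pi.single i 1) =
      if j = 1 ∧ k = 1 ∧ i = 0 then -2 * deriv h (p 0) else 0 := by
  fin_cases j <;> fin_cases k <;>
    simp (config := { decide := true }) only [gh, Fin.isValue] <;>
    norm_num
  · rw [(fd11 h hh p).fderiv]
    fin_cases i <;>
      simp (config := { decide := true }) [ContinuousLinearMap.proj, Pi.single, fderiv_apply_one_eq_deriv]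

/-- the only nonzero covariant derivatives of coordinate frames for
g_h are ∇_{∂x}∂x = h'(t)∂t and ∇_{∂x}∂t = ∇_{∂t}∂x = -h'(t)∂y. -/
theorem stmt7 (h : ℝ → ℝ) (hh : ContDiff ℝ (⊤ : ℕ∞) h)
    (Γ : (Fin 3 → ℝ) → Fin 3 → Fin 3 → Fin 3 → ℝ)
    (hΓ : IsLeviCivita (gh h) Γ) :
    ∀ p : Fin 3 → ℝ,
      Γ p 1 1 0 = deriv h (p 0) ∧
      Γ p 1 0 2 = -deriv h (p 0) ∧
      Γ p 0 1 2 = -deriv h (p 0) ∧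
      ∀ i j k : Fin 3,
        ¬((i = 1 ∧ j = 1 ∧ k = 0) ∨ (i = 1 ∧ j = 0 ∧ k = 2) ∨
          (i = 0 ∧ j = 1 ∧ k = 2)) →
        Γ p i j k = 0 := by
  obtain ⟨hs, he⟩ := hΓ
  intro p
  have E : ∀ i j k : Fin 3,
      (if j = 1 ∧ k = 1 ∧ i = 0 then -2 * deriv h (p 0) else 0) =
        (∑ l, Γ p i j l * gh h p l k) + (∑ l, Γ p i k l * gh h p j l) := by
    intro i j k
    rw [← fd h hh p i j k]
    exact he p i j k
  have e000 := E 0 0 0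
  have e100 := E 1 0 0
  have e200 := E 2 0 0
  have e001 := E 0 0 1
  have e101 := E 1 0 1
  have e201 := E 2 0 1
  have e002 := E 0 0 2
  have e102 := E 1 0 2
  have e202 := E 2 0 2
  have e011 := E 0 1 1
  have e111 := E 1 1 1
  have e211 := E 2 1 1
  have e012 := E 0 1 2
  have e112 := E 1 1 2
  have e212 := E 2 1 2
  have e022 := E 0 2 2
  have e122 := E 1 2 2
  have e222 := E 2 2 2
  simp (config := { decide := true }) [Fin.sum_univ_three, gh] at e000 e100 e200 e001 e101 e201 e002 e102 e202 e011 e111 e211 e012 e112 e212 e022 e122 e222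
  -- Phase 1: easy zeros
  have ha00 : Γ p 0 0 0 = 0 := by linarith
  have ha10 : Γ p 1 0 0 = 0 := by linarith
  have ha20 : Γ p 2 0 0 = 0 := by linarith
  have ha01 : Γ p 0 1 0 = 0 := by rw [hs p 0 1 0]; exact ha10
  have ha02 : Γ p 0 2 0 = 0 := by rw [hs p 0 2 0]; exact ha20
  have hb02 : Γ p 0 2 1 = 0 := by linarith
  have hb12 : Γ p 1 2 1 = 0 := by linarith
  have hb22 : Γ p 2 2 1 = 0 := by linarith
  have hb20 : Γ p 2 0 1 = 0 := by rw [hs p 2 0 1]; exact hb02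
  have hb21 : Γ p 2 1 1 = 0 := by rw [hs p 2 1 1]; exact hb12
  have hb00 : Γ p 0 0 1 = 0 := by linarith
  have ha22 : Γ p 2 2 0 = 0 := by linarith
  -- Phase 2: kill the nonlinear terms involving known-zero symbols
  simp only [hb00, hb02, hb12, hb22, hb20, hb21, mul_zero, zero_mul, neg_zero, zero_add,
    add_zero] at e001 e201 e011 e211 e012 e112 e212
  have hc22 : Γ p 2 2 2 = 0 := by linarith
  have hc21 : Γ p 2 1 2 = 0 := by linarith
  have hc12 : Γ p 1 2 2 = 0 := by rw [hs p 1 2 2]; exact hc21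
  have hb11 : Γ p 1 1 1 = 0 := by linarith
  simp only [hb11, mul_zero, zero_mul, neg_zero, zero_add, add_zero] at e111
  have hc11 : Γ p 1 1 2 = 0 := by linarith
  have hc00 : Γ p 0 0 2 = 0 := by linarith
  -- the a12 cluster
  have s1 : Γ p 0 1 1 = Γ p 1 0 1 := hs p 0 1 1
  have s2 : Γ p 0 2 2 = Γ p 2 0 2 := hs p 0 2 2
  have s3 : Γ p 2 1 0 = Γ p 1 2 0 := hs p 2 1 0
  have ha12 : Γ p 1 2 0 = 0 := by linarith
  have ha21 : Γ p 2 1 0 = 0 := by linarith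
  have hb10 : Γ p 1 0 1 = 0 := by linarith
  have hb01 : Γ p 0 1 1 = 0 := by linarith
  have hc02 : Γ p 0 2 2 = 0 := by linarith
  have hc20 : Γ p 2 0 2 = 0 := by linarith
  -- Phase 3: the nonzero symbols
  simp only [hb01, hb10, mul_zero, zero_mul, neg_zero, zero_add, add_zero] at e011 e101
  have hc01 : Γ p 0 1 2 = -deriv h (p 0) := by linarith
  have hc10 : Γ p 1 0 2 = -deriv h (p 0) := by rw [hs p 1 0 2]; exact hc01
  have ha11 : Γ p 1 1 0 = deriv h (p 0) := by linarith
  refine ⟨ha11, hc10, hc01, ?_⟩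
  intro i j k hn
  fin_cases i <;> fin_cases j <;> fin_cases k <;>
    first
    | exact absurd (by decide) hn
    | exact ha00 | exact ha01 | exact ha02 | exact ha10 | exact ha12 | exact ha20
    | exact ha21 | exact ha22
    | exact hb00 | exact hb01 | exact hb02 | exact hb10 | exact hb11 | exact hb12
    | exact hb20 | exact hb21 | exact hb22
    | exact hc00 | exact hc02 | exact hc11 | exact hc12 | exact hc20 | exact hc21
    | exact hc22
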